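/- The following 3×3 matrices over F satisfy the B₂ affine Hecke relations with p = q² and give an irreducible representation (every invariant F-subspace of F³ is 0 or F³): X₁ = diag(q⁻², q⁻², 1); X₂ with rows [1, (q⁴−1)/q², 0], [0, 1, 0], [0, 0, q⁻²]; T₁ with rows [−q⁻¹, (q²+1)/q, (q²+1)²/q²], [0, −q⁻¹, 0], [0, 1, q]; T₂ with rows [0, 1, 0], [1, (q⁴−1)/q², 0], [0, 0, −q⁻²]. (This is the 3-dimensional non-calibrated composition factor U_b² of Ind_{Ĥ₁}^{Ĥ} ρ₂ᵇ in the case p = q².) -/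
import Mathlib


set_option maxHeartbeats 2000000
set_option synthInstance.maxHeartbeats 400000

noncomputable section

/-- `F = ℂ(q)`, the field of rational functions in one indeterminate over `ℂ`. -/
abbrev F : Type := RatFunc ℂ

/-- The indeterminate `q ∈ F`. -/
def qF : F := RatFunc.X

/-- The imaginary unit `i`, viewed as a constant in `F`. -/
def ii : F := RatFunc.C Complex.I

/-- A quadruple of `n × n` matrices over `F` satisfies the `B₂` affine Hecke relations
(with parameters `p`, `q`). -/
def HeckeRelF {n : ℕ} (p q : F) (T₁ T₂ X₁ X₂ : Matrix (Fin n) (Fin n) F) : Prop :=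
  IsUnit X₁ ∧ IsUnit X₂ ∧
  (T₁ - q • 1) * (T₁ + q⁻¹ • 1) = 0 ∧
  (T₂ - p • 1) * (T₂ + p⁻¹ • 1) = 0 ∧
  T₁ * T₂ * T₁ * T₂ = T₂ * T₁ * T₂ * T₁ ∧
  T₁ * X₂ * T₁ = X₁ ∧
  T₂ * X₂⁻¹ * T₂ = X₂ ∧
  T₂ * X₁ = X₁ * T₂ ∧
  X₁ * X₂ = X₂ * X₁

/-- Irreducibility: the only `F`-subspaces of `Fⁿ` invariant under all four matrices
are `0` and `Fⁿ`. -/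
def IsIrredRepF {n : ℕ} (T₁ T₂ X₁ X₂ : Matrix (Fin n) (Fin n) F) : Prop :=
  ∀ U : Submodule F (Fin n → F),
    (∀ v ∈ U, T₁.mulVec v ∈ U) → (∀ v ∈ U, T₂.mulVec v ∈ U) →
    (∀ v ∈ U, X₁.mulVec v ∈ U) → (∀ v ∈ U, X₂.mulVec v ∈ U) →
    U = ⊥ ∨ U = ⊤

/-- `X₁` of `U_b²` at `p = q²`. -/
def X1b2q2 : Matrix (Fin 3) (Fin 3) F := !![qF⁻¹ ^ 2, 0, 0; 0, qF⁻¹ ^ 2, 0; 0, 0, 1]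

/-- `X₂` of `U_b²` at `p = q²`. -/
def X2b2q2 : Matrix (Fin 3) (Fin 3) F :=
  !![1, (qF ^ 4 - 1) / qF ^ 2, 0; 0, 1, 0; 0, 0, qF⁻¹ ^ 2]

/-- `T₁` of `U_b²` at `p = q²`. -/
def T1b2q2 : Matrix (Fin 3) (Fin 3) F :=
  !![-qF⁻¹, (qF ^ 2 + 1) / qF, (qF ^ 2 + 1) ^ 2 / qF ^ 2; 0, -qF⁻¹, 0; 0, 1, qF]

/-- `T₂` of `U_b²` at `p = q²`. -/
def T2b2q2 : Matrix (Fin 3) (Fin 3) F :=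
  !![0, 1, 0; 1, (qF ^ 4 - 1) / qF ^ 2, 0; 0, 0, -qF⁻¹ ^ 2]

/-! ### Auxiliary lemmas -/

lemma qF_ne : qF ≠ 0 := RatFunc.X_ne_zero

lemma algMap_qF (p : Polynomial ℂ) : Polynomial.aeval qF p = algebraMap (Polynomial ℂ) F p := by
  rw [qF, ← RatFunc.algebraMap_X, Polynomial.aeval_algebraMap_apply]
  simp

lemma poly_qF_ne {p : Polynomial ℂ} (hp : p ≠ 0) : Polynomial.aeval qF p ≠ 0 := by
  rw [algMap_qF]; exact RatFunc.algebraMap_ne_zero hp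

lemma sq_add_one_ne : qF ^ 2 + 1 ≠ 0 := by
  have h := poly_qF_ne (p := Polynomial.X ^ 2 + 1) (by
    intro h
    have := congrArg (Polynomial.coeff · 0) h
    simp at this)
  simpa using h

lemma pow4_sub_one_ne : qF ^ 4 - 1 ≠ 0 := by
  have h := poly_qF_ne (p := Polynomial.X ^ 4 - 1) (by
    intro h
    have := congrArg (Polynomial.coeff · 0) h
    simp at this)
  simpa using h

lemma sq_sub_one_ne : qF ^ 2 - 1 ≠ 0 := by
  have h := poly_qF_ne (p := Polynomial.X ^ 2 - 1) (by
    intro h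
    have := congrArg (Polynomial.coeff · 0) h
    simp at this)
  simpa using h

/-- Candidate inverse of `X₂`. -/
def X2invb2q2 : Matrix (Fin 3) (Fin 3) F :=
  !![1, -((qF ^ 4 - 1) / qF ^ 2), 0; 0, 1, 0; 0, 0, qF ^ 2]

lemma X2_inv_eq : X2b2q2⁻¹ = X2invb2q2 := by
  apply Matrix.inv_eq_right_inv
  ext i j
  fin_cases i <;> fin_cases j
  all_goals simp [X2b2q2, X2invb2q2, Matrix.mul_apply, Fin.sum_univ_three, Matrix.one_apply,
    Matrix.vecHead, Matrix.vecTail]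
  all_goals (try (field_simp [qF_ne]; try (ring_nf; field_simp [qF_ne])))
  all_goals ring

/-! ### mulVec computations -/

lemma X1_mulVec (v : Fin 3 → F) :
    X1b2q2.mulVec v = ![qF⁻¹ ^ 2 * v 0, qF⁻¹ ^ 2 * v 1, v 2] := by
  funext i
  fin_cases i <;>
    simp [X1b2q2, Matrix.mulVec, dotProduct, Fin.sum_univ_three, Matrix.vecHead, Matrix.vecTail]

lemma X2_mulVec (v : Fin 3 → F) :
    X2b2q2.mulVec v = ![v 0 + (qF ^ 4 - 1) / qF ^ 2 * v 1, v 1, qF⁻¹ ^ 2 * v 2] := by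
  funext i
  fin_cases i <;>
    simp [X2b2q2, Matrix.mulVec, dotProduct, Fin.sum_univ_three, Matrix.vecHead, Matrix.vecTail]

lemma T1_mulVec (v : Fin 3 → F) :
    T1b2q2.mulVec v = ![-qF⁻¹ * v 0 + (qF ^ 2 + 1) / qF * v 1 + (qF ^ 2 + 1) ^ 2 / qF ^ 2 * v 2,
      -qF⁻¹ * v 1, v 1 + qF * v 2] := by
  funext i
  fin_cases i <;>
    simp [T1b2q2, Matrix.mulVec, dotProduct, Fin.sum_univ_three, Matrix.vecHead,
      Matrix.vecTail] <;> ring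

lemma T2_mulVec (v : Fin 3 → F) :
    T2b2q2.mulVec v = ![v 1, v 0 + (qF ^ 4 - 1) / qF ^ 2 * v 1, -qF⁻¹ ^ 2 * v 2] := by
  funext i
  fin_cases i <;>
    simp [T2b2q2, Matrix.mulVec, dotProduct, Fin.sum_univ_three, Matrix.vecHead, Matrix.vecTail]

/-! ### The main theorem -/

/-- `U_b²` at `p = q²` satisfies the `B₂` affine Hecke relations and is irreducible. -/
theorem Ub2q2_relations_and_irreducible :
    HeckeRelF (qF ^ 2) qF T1b2q2 T2b2q2 X1b2q2 X2b2q2 ∧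
    IsIrredRepF T1b2q2 T2b2q2 X1b2q2 X2b2q2 := by
  constructor
  · refine ⟨?_, ?_, ?_, ?_, ?_, ?_, ?_, ?_, ?_⟩
    · rw [Matrix.isUnit_iff_isUnit_det, isUnit_iff_ne_zero]
      simp [X1b2q2, Matrix.det_fin_three, qF_ne]
    · rw [Matrix.isUnit_iff_isUnit_det, isUnit_iff_ne_zero]
      simp [X2b2q2, Matrix.det_fin_three, qF_ne]
    · ext i j
      fin_cases i <;> fin_cases j
      all_goals simp [T1b2q2, Matrix.mul_apply, Fin.sum_univ_three, Matrix.one_apply,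
        Matrix.vecHead, Matrix.vecTail]
      all_goals (try (field_simp [qF_ne]; try (ring_nf; field_simp [qF_ne])))
      all_goals ring
    · ext i j
      fin_cases i <;> fin_cases j
      all_goals simp [T2b2q2, Matrix.mul_apply, Fin.sum_univ_three, Matrix.one_apply,
        Matrix.vecHead, Matrix.vecTail]
      all_goals (try (field_simp [qF_ne]; try (ring_nf; field_simp [qF_ne])))
      all_goals ring
    · ext i j
      fin_cases i <;> fin_cases j
      all_goals simp [T1b2q2, T2b2q2, Matrix.mul_apply, Fin.sum_univ_three,
        Matrix.vecHead, Matrix.vecTail]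
      all_goals (try (field_simp [qF_ne]; try (ring_nf; field_simp [qF_ne])))
      all_goals ring
    · ext i j
      fin_cases i <;> fin_cases j
      all_goals simp [T1b2q2, X1b2q2, X2b2q2, Matrix.mul_apply, Fin.sum_univ_three,
        Matrix.vecHead, Matrix.vecTail]
      all_goals (try (field_simp [qF_ne]; try (ring_nf; field_simp [qF_ne])))
      all_goals ring
    · rw [X2_inv_eq]
      ext i j
      fin_cases i <;> fin_cases j
      all_goals simp [T2b2q2, X2b2q2, X2invb2q2, Matrix.mul_apply, Fin.sum_univ_three,
        Matrix.vecHead, Matrix.vecTail]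
      all_goals (try (field_simp [qF_ne]; try (ring_nf; field_simp [qF_ne])))
      all_goals ring
    · ext i j
      fin_cases i <;> fin_cases j
      all_goals simp [T2b2q2, X1b2q2, Matrix.mul_apply, Fin.sum_univ_three,
        Matrix.vecHead, Matrix.vecTail]
      all_goals (try (field_simp [qF_ne]; try (ring_nf; field_simp [qF_ne])))
      all_goals ring
    · ext i j
      fin_cases i <;> fin_cases j
      all_goals simp [X1b2q2, X2b2q2, Matrix.mul_apply, Fin.sum_univ_three,
        Matrix.vecHead, Matrix.vecTail]
      all_goals (try (field_simp [qF_ne]; try (ring_nf; field_simp [qF_ne])))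
      all_goals ring
  · -- irreducibility
    intro U h1 h2 h3 h4
    by_cases hU : U = ⊥
    · exact Or.inl hU
    · right
      obtain ⟨v, hv, hv0⟩ := Submodule.exists_mem_ne_zero_of_ne_bot hU
      -- step 1 : e0 ∈ U
      have he0 : (![1, 0, 0] : Fin 3 → F) ∈ U := by
        by_cases h5 : v 2 = 0
        · -- v = (v0, v1, 0)
          by_cases h6 : v 1 = 0
          · -- v = v0 • e0 with v0 ≠ 0
            have hv0' : v 0 ≠ 0 := by
              intro h
              apply hv0
              funext i
              fin_cases i <;> simp [h, h5, h6]
            have hveq : v = v 0 • ![1, 0, 0] := by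
              funext i
              fin_cases i <;> simp [h5, h6]
            have hmem : (v 0)⁻¹ • v ∈ U := U.smul_mem _ hv
            have heq : (v 0)⁻¹ • v = ![1, 0, 0] := by
              funext i
              fin_cases i <;>
                simp [Pi.smul_apply, smul_eq_mul, h5, h6, inv_mul_cancel₀ hv0']
            rwa [heq] at hmem
          · -- X2 v − v = (c · v1) • e0
            have hc : (qF ^ 4 - 1) / qF ^ 2 * v 1 ≠ 0 :=
              mul_ne_zero (div_ne_zero pow4_sub_one_ne (pow_ne_zero _ qF_ne)) h6
            have hmem : X2b2q2.mulVec v - v ∈ U := U.sub_mem (h4 v hv) hv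
            have heq : X2b2q2.mulVec v - v = ((qF ^ 4 - 1) / qF ^ 2 * v 1) • ![1, 0, 0] := by
              funext i
              fin_cases i <;>
                simp [X2_mulVec, h5, Matrix.vecHead, Matrix.vecTail]
            have := U.smul_mem ((qF ^ 4 - 1) / qF ^ 2 * v 1)⁻¹ hmem
            rwa [heq, smul_smul, inv_mul_cancel₀ hc, one_smul] at this
        · -- v2 ≠ 0 : extract e2 first
          have hone : (1 : F) - qF⁻¹ ^ 2 ≠ 0 := by
            have heq : (1 : F) - qF⁻¹ ^ 2 = (qF ^ 2 - 1) / qF ^ 2 := by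
              field_simp [qF_ne]
            rw [heq]
            exact div_ne_zero sq_sub_one_ne (pow_ne_zero _ qF_ne)
          have hc : ((1 : F) - qF⁻¹ ^ 2) * v 2 ≠ 0 := mul_ne_zero hone h5
          have hmem : X1b2q2.mulVec v - qF⁻¹ ^ 2 • v ∈ U := U.sub_mem (h3 v hv) (U.smul_mem _ hv)
          have heq : X1b2q2.mulVec v - qF⁻¹ ^ 2 • v
              = (((1 : F) - qF⁻¹ ^ 2) * v 2) • ![0, 0, 1] := by
            funext i
            fin_cases i <;> simp [X1_mulVec, Matrix.vecHead, Matrix.vecTail] <;> ring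
          have he2' : (![0, 0, 1] : Fin 3 → F) ∈ U := by
            have := U.smul_mem (((1 : F) - qF⁻¹ ^ 2) * v 2)⁻¹ hmem
            rwa [heq, smul_smul, inv_mul_cancel₀ hc, one_smul] at this
          have hd : (qF ^ 2 + 1) ^ 2 / qF ^ 2 ≠ 0 :=
            div_ne_zero (pow_ne_zero _ sq_add_one_ne) (pow_ne_zero _ qF_ne)
          have hmem2 : T1b2q2.mulVec ![0, 0, 1] - qF • ![0, 0, 1] ∈ U :=
            U.sub_mem (h1 _ he2') (U.smul_mem _ he2')
          have heq2 : T1b2q2.mulVec ![0, 0, 1] - qF • ![0, 0, 1]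
              = ((qF ^ 2 + 1) ^ 2 / qF ^ 2) • ![1, 0, 0] := by
            funext i
            fin_cases i <;> simp [T1_mulVec, Matrix.vecHead, Matrix.vecTail] <;> ring
          have := U.smul_mem ((qF ^ 2 + 1) ^ 2 / qF ^ 2)⁻¹ hmem2
          rwa [heq2, smul_smul, inv_mul_cancel₀ hd, one_smul] at this
      -- step 2 : e1 ∈ U
      have he1 : (![0, 1, 0] : Fin 3 → F) ∈ U := by
        have := h2 _ he0
        have heq : T2b2q2.mulVec ![1, 0, 0] = ![0, 1, 0] := by
          funext i
          fin_cases i <;> simp [T2_mulVec, Matrix.vecHead, Matrix.vecTail]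
        rwa [heq] at this
      -- step 3 : e2 ∈ U
      have he2 : (![0, 0, 1] : Fin 3 → F) ∈ U := by
        have hmem : T1b2q2.mulVec ![0, 1, 0] + qF⁻¹ • ![0, 1, 0]
            - ((qF ^ 2 + 1) / qF) • ![1, 0, 0] ∈ U :=
          U.sub_mem (U.add_mem (h1 _ he1) (U.smul_mem _ he1)) (U.smul_mem _ he0)
        have heq : T1b2q2.mulVec ![0, 1, 0] + qF⁻¹ • ![0, 1, 0]
            - ((qF ^ 2 + 1) / qF) • ![1, 0, 0] = ![0, 0, 1] := by
          funext i
          fin_cases i <;>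
            simp [T1_mulVec, Matrix.vecHead, Matrix.vecTail] <;> ring
        rwa [heq] at hmem
      -- conclude
      rw [Submodule.eq_top_iff']
      intro w
      have hw : w = w 0 • ![1, 0, 0] + w 1 • ![0, 1, 0] + w 2 • ![0, 0, 1] := by
        funext i
        fin_cases i <;> simp
      rw [hw]
      exact U.add_mem (U.add_mem (U.smul_mem _ he0) (U.smul_mem _ he1)) (U.smul_mem _ he2)
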